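/- Let G be a finite bipartite graph with m edges. Then the largest eigenvalue of the adjacency matrix of G satisfies λ1(G) ≤ √m. -/

import Mathlib

open MeasureTheory Filter Asymptotics

noncomputable section

/-- The `n`-dimensional cube graph `Q^n`: vertices are vectors in `{0,1}^n`,
two vertices adjacent iff they differ in exactly one coordinate. -/
def cubeGraph (n : ℕ) : SimpleGraph (Fin n → Bool) where
  Adj x y := hammingDist x y = 1
  symm := ⟨fun x y h => by show hammingDist y x = 1; rwa [hammingDist_comm]⟩
  loopless := ⟨fun x h => by simp [hammingDist_self] at h⟩

/-- The subgraph of the `n`-cube determined by a configuration `ω` of edge indicators: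
an edge of `Q^n` is kept iff its indicator is `true`. -/
def randCube (n : ℕ) (ω : Sym2 (Fin n → Bool) → Bool) : SimpleGraph (Fin n → Bool) where
  Adj x y := (cubeGraph n).Adj x y ∧ ω s(x, y) = true
  symm := ⟨fun x y h => ⟨(cubeGraph n).symm.symm _ _ h.1, by rw [Sym2.eq_swap]; exact h.2⟩⟩
  loopless := ⟨fun x h => (cubeGraph n).loopless.irrefl x h.1⟩

/-- The product Bernoulli(p) measure on edge-indicator configurations: each potential
edge appears independently with probability `p`. -/
def cubeMeasure (n : ℕ) (p : ℝ) : Measure (Sym2 (Fin n → Bool) → Bool) :=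
  Measure.pi fun _ => (PMF.bernoulli (min (Real.toNNReal p) 1) (min_le_right _ _)).toMeasure

/-- Degree of a vertex. -/
def deg {V : Type*} [Fintype V] (G : SimpleGraph V) (v : V) : ℕ := (G.neighborSet v).ncard

/-- Maximum degree. -/
def maxDeg {V : Type*} [Fintype V] (G : SimpleGraph V) : ℕ := ⨆ v, deg G v

/-- Adjacency matrix over ℝ. -/
def adjMat {V : Type*} [Fintype V] (G : SimpleGraph V) : Matrix V V ℝ :=
  @SimpleGraph.adjMatrix ℝ V G (Classical.decRel _) _ _

theorem adjMat_isHermitian {V : Type*} [Fintype V] (G : SimpleGraph V) :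
    (adjMat G).IsHermitian := by
  apply Matrix.ext
  intro i j
  simp only [adjMat, Matrix.conjTranspose_apply, SimpleGraph.adjMatrix_apply, star_trivial]
  by_cases h : G.Adj i j
  · rw [if_pos h, if_pos (G.symm.symm _ _ h)]
  · rw [if_neg h, if_neg (fun hji => h (G.symm.symm _ _ hji))]

/-- The largest eigenvalue of the adjacency matrix of `G`. -/
def lambda1 {V : Type*} [Fintype V] [DecidableEq V] (G : SimpleGraph V) : ℝ :=
  ⨆ v, (adjMat_isHermitian G).eigenvalues v

/-- `κ(n) = max { k : 2^n C(n,k) p^k (1-p)^{n-k} ≥ 1 }`. -/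
def kappa (n : ℕ) (p : ℝ) : ℕ :=
  sSup {k : ℕ | 1 ≤ (2 : ℝ) ^ n * n.choose k * p ^ k * (1 - p) ^ (n - k)}

/-!
For a unit vector `x`, `xᵀ A x = ∑_{u ~ v} x_u x_v` is a sum over the `2m` ordered edges, so by
Cauchy–Schwarz `(xᵀ A x)² ≤ 2m ∑_{u ~ v} x_u² x_v²`. If `(S, T)` is a bipartition, every ordered
edge lies in `S × T` or `T × S`, hence `∑_{u ~ v} x_u² x_v² ≤ 2 (∑_S x²)(∑_T x²) ≤ 1/2`.
-/

open Finset Matrix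

namespace Matrix.IsHermitian

variable {n : Type*} [Fintype n] [DecidableEq n] {A : Matrix n n ℝ}

theorem eigenvalues_le_of_dotProduct_mulVec_le (hA : A.IsHermitian) {c : ℝ}
    (h : ∀ x, x ⬝ᵥ A *ᵥ x ≤ c * (x ⬝ᵥ x)) (i : n) : hA.eigenvalues i ≤ c := by
  set x : n → ℝ := ⇑(hA.eigenvectorBasis i)
  have hx : x ⬝ᵥ x = 1 := by
    have := real_inner_self_eq_norm_sq (hA.eigenvectorBasis i)
    rwa [hA.eigenvectorBasis.orthonormal.1 i, one_pow, EuclideanSpace.inner_eq_star_dotProduct,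
      star_trivial] at this
  have := h x
  rwa [hA.mulVec_eigenvectorBasis i, dotProduct_smul, smul_eq_mul, hx, mul_one, mul_one] at this

end Matrix.IsHermitian

namespace SimpleGraph

variable {V : Type*} [Fintype V] {G : SimpleGraph V} [DecidableRel G.Adj]

theorem dotProduct_adjMatrix_mulVec {R : Type*} [CommSemiring R] (x : V → R) :
    x ⬝ᵥ G.adjMatrix R *ᵥ x = ∑ p : V × V with G.Adj p.1 p.2, x p.1 * x p.2 := by
  rw [dotProduct_mulVec_adjMatrix, sum_filter, ← univ_product_univ, sum_product]

theorem IsBipartiteWith.two_mul_sum_adj_mul_le {s t : Finset V}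
    (h : G.IsBipartiteWith s t) {f : V → ℝ} (hf : 0 ≤ f) :
    2 * ∑ p : V × V with G.Adj p.1 p.2, f p.1 * f p.2 ≤ (∑ v, f v) ^ 2 := by
  classical
  have hst : Disjoint s t := by exact_mod_cast h.disjoint
  have hsub : ({p | G.Adj p.1 p.2} : Finset (V × V)) ⊆ s ×ˢ t ∪ t ×ˢ s := by
    rintro ⟨u, v⟩ huv
    simpa using h.mem_of_adj (by simpa using huv)
  have hcross : ∑ p ∈ s ×ˢ t ∪ t ×ˢ s, f p.1 * f p.2
      = (∑ v ∈ s, f v) * (∑ v ∈ t, f v) + (∑ v ∈ t, f v) * (∑ v ∈ s, f v) := by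
    rw [sum_union (disjoint_product.2 (Or.inl hst)), sum_product, sum_product,
      sum_mul_sum, sum_mul_sum]
  have hunion : ∑ v ∈ s, f v + ∑ v ∈ t, f v ≤ ∑ v, f v := by
    rw [← sum_union hst]
    exact sum_le_univ_sum_of_nonneg hf
  calc 2 * ∑ p : V × V with G.Adj p.1 p.2, f p.1 * f p.2
      ≤ 2 * ∑ p ∈ s ×ˢ t ∪ t ×ˢ s, f p.1 * f p.2 := by
        gcongr 2 * ?_
        exact sum_le_sum_of_subset_of_nonneg hsub fun p _ _ => mul_nonneg (hf _) (hf _)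
    _ = 4 * ((∑ v ∈ s, f v) * ∑ v ∈ t, f v) := by rw [hcross]; ring
    _ ≤ (∑ v ∈ s, f v + ∑ v ∈ t, f v) ^ 2 := by rw [← mul_assoc]; exact four_mul_le_sq_add _ _
    _ ≤ (∑ v, f v) ^ 2 := by
        gcongr
        exact add_nonneg (sum_nonneg fun v _ => hf v) (sum_nonneg fun v _ => hf v)

theorem IsBipartite.sq_dotProduct_adjMatrix_mulVec_le (hG : G.IsBipartite) (x : V → ℝ) :
    (x ⬝ᵥ G.adjMatrix ℝ *ᵥ x) ^ 2 ≤ #G.edgeFinset * (x ⬝ᵥ x) ^ 2 := by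
  classical
  obtain ⟨s, t, hst⟩ := hG.exists_isBipartiteWith
  have hbip : G.IsBipartiteWith ↑s.toFinset ↑t.toFinset := by simpa using hst
  have hsq : 2 * ∑ p : V × V with G.Adj p.1 p.2, x p.1 ^ 2 * x p.2 ^ 2 ≤ (x ⬝ᵥ x) ^ 2 := by
    simpa [dotProduct, sq] using
      hbip.two_mul_sum_adj_mul_le (f := fun v => x v ^ 2) fun v => sq_nonneg (x v)
  rw [dotProduct_adjMatrix_mulVec]
  calc (∑ p : V × V with G.Adj p.1 p.2, x p.1 * x p.2) ^ 2
      ≤ #{p : V × V | G.Adj p.1 p.2} * ∑ p : V × V with G.Adj p.1 p.2, (x p.1 * x p.2) ^ 2 :=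
        sq_sum_le_card_mul_sum_sq
    _ = #G.edgeFinset * (2 * ∑ p : V × V with G.Adj p.1 p.2, x p.1 ^ 2 * x p.2 ^ 2) := by
        rw [← two_mul_card_edgeFinset]
        simp only [mul_pow, Nat.cast_mul, Nat.cast_ofNat]
        ring
    _ ≤ #G.edgeFinset * (x ⬝ᵥ x) ^ 2 := by gcongr

theorem IsBipartite.dotProduct_adjMatrix_mulVec_le_sqrt (hG : G.IsBipartite) (x : V → ℝ) :
    x ⬝ᵥ G.adjMatrix ℝ *ᵥ x ≤ √(#G.edgeFinset) * (x ⬝ᵥ x) := by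
  have hxx : 0 ≤ x ⬝ᵥ x := by simpa using dotProduct_self_star_nonneg x
  refine (le_abs_self _).trans (abs_le_of_sq_le_sq ?_ (by positivity))
  rw [mul_pow, Real.sq_sqrt (Nat.cast_nonneg _)]
  exact hG.sq_dotProduct_adjMatrix_mulVec_le x

end SimpleGraph

/-- a bipartite graph with `m` edges has `λ1(G) ≤ √m`. -/
theorem lambda1_bipartite_le_sqrt_edges {V : Type*} [Fintype V] [DecidableEq V]
    (G : SimpleGraph V) (hbip : G.Colorable 2) :
    lambda1 G ≤ Real.sqrt (G.edgeSet.ncard : ℝ) := by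
  classical
  rw [← G.coe_edgeFinset, Set.ncard_coe_finset]
  exact Real.iSup_le ((adjMat_isHermitian G).eigenvalues_le_of_dotProduct_mulVec_le
    (SimpleGraph.IsBipartite.dotProduct_adjMatrix_mulVec_le_sqrt hbip)) (Real.sqrt_nonneg _)
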